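/- arXiv:1607.05735 — 3 statements merged into one kernel-verified Lean document; each statement's English description precedes it below -/
import Mathlib

section
/- Let ρ and σ be density matrices on ℂ^n and let α > 1. Then the Hilbert α-divergence satisfies H_α(ρ‖σ) ≥ 0, with equality H_α(ρ‖σ) = 0 if and only if ρ = σ. -/
/-!
Every `E` with `α⁻¹ 𝟙 ≤ E ≤ 𝟙` has `α⁻¹ ≤ Tr[Eσ]` and `Tr[Eρ] ≤ 1`, so `sup_α(ρ/σ)` is a
finite supremum; `E = 𝟙` shows it is at least `1`, and for `ρ = σ` every ratio equals `1`.
If `ρ ≠ σ`, then `Δ = ρ - σ` is a nonzero traceless Hermitian matrix, and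
`E = (1 + α⁻¹)/2 · 𝟙 + ε Δ` with `ε = (1 - α⁻¹) / (2‖Δ‖)` is admissible (because
`-‖Δ‖ 𝟙 ≤ Δ ≤ ‖Δ‖ 𝟙`) and has `Tr[EΔ] = ε Tr[Δ²] > 0`, so the supremum exceeds `1`.
-/

open scoped ComplexOrder

/-- `sup_α(ρ/σ) = sup { Tr[Eρ]/Tr[Eσ] : α⁻¹·𝟙 ≤ E ≤ 𝟙 }`, where the operator
inequalities mean that `E - α⁻¹𝟙` and `𝟙 - E` are positive semidefinite. -/
noncomputable def supAlpha {n : ℕ} (α : ℝ) (ρ σ : Matrix (Fin n) (Fin n) ℂ) : ℝ :=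
  sSup { x : ℝ | ∃ E : Matrix (Fin n) (Fin n) ℂ,
    (E - ((α⁻¹ : ℝ) : ℂ) • (1 : Matrix (Fin n) (Fin n) ℂ)).PosSemidef ∧
    ((1 : Matrix (Fin n) (Fin n) ℂ) - E).PosSemidef ∧
    x = ((E * ρ).trace.re) / ((E * σ).trace.re) }

/-- The Hilbert α-divergence `H_α(ρ‖σ) = (α/(α-1))·log₂ sup_α(ρ/σ)`. -/
noncomputable def HAlpha {n : ℕ} (α : ℝ) (ρ σ : Matrix (Fin n) (Fin n) ℂ) : ℝ :=
  (α / (α - 1)) * Real.logb 2 (supAlpha α ρ σ)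

open scoped MatrixOrder Matrix.Norms.L2Operator

namespace Matrix

section RCLike

variable {ι 𝕜 : Type*} [Fintype ι] [RCLike 𝕜]

lemma PosSemidef.trace_mul_nonneg {A B : Matrix ι ι 𝕜} (hA : A.PosSemidef) (hB : B.PosSemidef) :
    0 ≤ (A * B).trace := by
  classical
  obtain ⟨X, rfl⟩ := CStarAlgebra.nonneg_iff_eq_star_mul_self.mp hA.nonneg
  rw [mul_assoc, trace_mul_comm]
  exact (hB.mul_mul_conjTranspose_same X).trace_nonneg

lemma trace_mul_le_trace_mul_of_posSemidef_sub {A B C : Matrix ι ι 𝕜}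
    (hAB : (B - A).PosSemidef) (hC : C.PosSemidef) : (A * C).trace ≤ (B * C).trace := by
  simpa [sub_mul] using hAB.trace_mul_nonneg hC

end RCLike

variable {ι : Type*} [DecidableEq ι]

lemma posSemidef_one_sub_smul_one {c : ℝ} (hc : c ≤ 1) :
    ((1 : Matrix ι ι ℂ) - (c : ℂ) • 1).PosSemidef := by
  have h : (1 : Matrix ι ι ℂ) - (c : ℂ) • 1 = ((1 - c : ℝ) : ℂ) • 1 := by
    push_cast
    rw [sub_smul, one_smul]
  rw [h]
  exact PosSemidef.one.smul (Complex.zero_le_real.mpr (sub_nonneg.mpr hc))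

variable [Fintype ι]

lemma le_re_trace_mul_of_posSemidef_sub_smul_one {E σ : Matrix ι ι ℂ} {c : ℝ}
    (hE : (E - (c : ℂ) • 1).PosSemidef) (hσ : σ.PosSemidef) (hσtr : σ.trace = 1) :
    c ≤ (E * σ).trace.re := by
  have h := trace_mul_le_trace_mul_of_posSemidef_sub hE hσ
  rw [smul_mul, one_mul, trace_smul, hσtr] at h
  simpa using (Complex.le_def.mp h).1

lemma re_trace_mul_le_one_of_posSemidef_one_sub {E ρ : Matrix ι ι ℂ}
    (hE : (1 - E).PosSemidef) (hρ : ρ.PosSemidef) (hρtr : ρ.trace = 1) :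
    (E * ρ).trace.re ≤ 1 := by
  have h := trace_mul_le_trace_mul_of_posSemidef_sub hE hρ
  rw [one_mul, hρtr] at h
  simpa using (Complex.le_def.mp h).1

lemma IsHermitian.exists_re_trace_mul_pos {Δ : Matrix ι ι ℂ} (hΔ : Δ.IsHermitian) (hΔ0 : Δ ≠ 0)
    (htr : Δ.trace = 0) {a b : ℝ} (hab : a < b) :
    ∃ E : Matrix ι ι ℂ, (E - (a : ℂ) • 1).PosSemidef ∧ ((b : ℂ) • 1 - E).PosSemidef ∧
      0 < (E * Δ).trace.re := by
  have hnorm : algebraMap ℝ (Matrix ι ι ℂ) ‖Δ‖ = (‖Δ‖ : ℂ) • 1 := by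
    rw [Algebra.algebraMap_eq_smul_one, ← Complex.coe_smul]
  have hle : ((‖Δ‖ : ℂ) • 1 - Δ).PosSemidef := by
    rw [← hnorm, ← le_iff]
    exact hΔ.isSelfAdjoint.le_algebraMap_norm_self
  have hge : ((‖Δ‖ : ℂ) • 1 + Δ).PosSemidef := by
    rw [← hnorm, ← sub_neg_eq_add, ← le_iff]
    exact neg_le.mp hΔ.isSelfAdjoint.neg_algebraMap_norm_le_self
  set ε := (b - a) / (2 * ‖Δ‖)
  have hε : 0 < ε := div_pos (by linarith) (by positivity)
  have hεΔ : (ε : ℂ) * ‖Δ‖ = (b - a) / 2 := by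
    have : ε * ‖Δ‖ = (b - a) / 2 := by
      simp only [ε]
      field_simp
    exact_mod_cast this
  refine ⟨(((a + b) / 2 : ℝ) : ℂ) • 1 + (ε : ℂ) • Δ, ?_, ?_, ?_⟩
  · convert hge.smul (Complex.zero_le_real.mpr hε.le) using 1
    push_cast
    linear_combination (norm := module) (-hεΔ) • (1 : Matrix ι ι ℂ)
  · convert hle.smul (Complex.zero_le_real.mpr hε.le) using 1
    push_cast
    linear_combination (norm := module) (-hεΔ) • (1 : Matrix ι ι ℂ)
  · have hsq : 0 < (Δ * Δ).trace := by
      simpa only [hΔ.eq] using (posSemidef_conjTranspose_mul_self Δ).trace_nonneg.lt_of_ne'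
        (trace_conjTranspose_mul_self_eq_zero_iff.not.mpr hΔ0)
    simpa [add_mul, htr] using mul_pos hε (Complex.lt_def.mp hsq).1

end Matrix

open Matrix

section Divergence

variable {n : ℕ} {α : ℝ} {ρ σ : Matrix (Fin n) (Fin n) ℂ}

lemma div_le_supAlpha (hρ : ρ.PosSemidef) (hρtr : ρ.trace = 1) (hσ : σ.PosSemidef)
    (hσtr : σ.trace = 1) (hα : 0 < α) {E : Matrix (Fin n) (Fin n) ℂ}
    (hE₁ : (E - ((α⁻¹ : ℝ) : ℂ) • 1).PosSemidef) (hE₂ : (1 - E).PosSemidef) :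
    (E * ρ).trace.re / (E * σ).trace.re ≤ supAlpha α ρ σ := by
  refine le_csSup ⟨α, ?_⟩ ⟨E, hE₁, hE₂, rfl⟩
  rintro _ ⟨F, hF₁, hF₂, rfl⟩
  have hden := le_re_trace_mul_of_posSemidef_sub_smul_one hF₁ hσ hσtr
  rw [div_le_iff₀ ((inv_pos.mpr hα).trans_le hden)]
  calc (F * ρ).trace.re ≤ 1 := re_trace_mul_le_one_of_posSemidef_one_sub hF₂ hρ hρtr
    _ = α * α⁻¹ := (mul_inv_cancel₀ hα.ne').symm
    _ ≤ α * (F * σ).trace.re := by gcongr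

lemma one_le_supAlpha (hρ : ρ.PosSemidef) (hρtr : ρ.trace = 1) (hσ : σ.PosSemidef)
    (hσtr : σ.trace = 1) (hα : 1 ≤ α) : 1 ≤ supAlpha α ρ σ := by
  simpa [hρtr, hσtr] using div_le_supAlpha hρ hρtr hσ hσtr (by linarith)
    (posSemidef_one_sub_smul_one (inv_le_one_of_one_le₀ hα)) (by simpa using PosSemidef.zero)

lemma supAlpha_self (hσ : σ.PosSemidef) (hσtr : σ.trace = 1) (hα : 1 ≤ α) :
    supAlpha α σ σ = 1 := by
  refine le_antisymm (csSup_le ?_ ?_) (one_le_supAlpha hσ hσtr hσ hσtr hα)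
  · exact ⟨1, 1, posSemidef_one_sub_smul_one (inv_le_one_of_one_le₀ hα),
      by simpa using PosSemidef.zero, by simp [hσtr]⟩
  · rintro _ ⟨E, -, -, rfl⟩
    exact div_self_le_one _

lemma one_lt_supAlpha_of_ne (hρ : ρ.PosSemidef) (hρtr : ρ.trace = 1) (hσ : σ.PosSemidef)
    (hσtr : σ.trace = 1) (hα : 1 < α) (hne : ρ ≠ σ) : 1 < supAlpha α ρ σ := by
  obtain ⟨E, hE₁, hE₂, hpos⟩ := (hρ.isHermitian.sub hσ.isHermitian).exists_re_trace_mul_pos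
    (sub_ne_zero.mpr hne) (by rw [trace_sub, hρtr, hσtr, sub_self]) (inv_lt_one_of_one_lt₀ hα)
  have hden : 0 < (E * σ).trace.re := (inv_pos.mpr (by linarith)).trans_le
    (le_re_trace_mul_of_posSemidef_sub_smul_one hE₁ hσ hσtr)
  calc 1 < (E * ρ).trace.re / (E * σ).trace.re := by
        rw [one_lt_div hden]
        simpa [mul_sub, trace_sub] using hpos
    _ ≤ supAlpha α ρ σ := div_le_supAlpha hρ hρtr hσ hσtr (by linarith) hE₁ (by simpa using hE₂)

lemma hAlpha_nonneg (hρ : ρ.PosSemidef) (hρtr : ρ.trace = 1) (hσ : σ.PosSemidef)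
    (hσtr : σ.trace = 1) (hα : 1 < α) : 0 ≤ HAlpha α ρ σ :=
  mul_nonneg (div_pos (by linarith) (by linarith)).le
    (Real.logb_nonneg one_lt_two (one_le_supAlpha hρ hρtr hσ hσtr hα.le))

lemma hAlpha_pos_of_ne (hρ : ρ.PosSemidef) (hρtr : ρ.trace = 1) (hσ : σ.PosSemidef)
    (hσtr : σ.trace = 1) (hα : 1 < α) (hne : ρ ≠ σ) : 0 < HAlpha α ρ σ :=
  mul_pos (div_pos (by linarith) (by linarith))
    (Real.logb_pos one_lt_two (one_lt_supAlpha_of_ne hρ hρtr hσ hσtr hα hne))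

lemma hAlpha_self (hσ : σ.PosSemidef) (hσtr : σ.trace = 1) (hα : 1 ≤ α) : HAlpha α σ σ = 0 := by
  rw [HAlpha, supAlpha_self hσ hσtr hα, Real.logb_one, mul_zero]

end Divergence

/-- For density matrices `ρ, σ` on `ℂ^n` and `α > 1`, the Hilbert α-divergence is
nonnegative, and it vanishes if and only if `ρ = σ`. -/
theorem hilbert_alpha_divergence_nonneg_and_eq_zero_iff
    {n : ℕ} (ρ σ : Matrix (Fin n) (Fin n) ℂ)
    (hρ : ρ.PosSemidef) (hρtr : ρ.trace = 1)
    (hσ : σ.PosSemidef) (hσtr : σ.trace = 1)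
    (α : ℝ) (hα : 1 < α) :
    0 ≤ HAlpha α ρ σ ∧ (HAlpha α ρ σ = 0 ↔ ρ = σ) := by
  refine ⟨hAlpha_nonneg hρ hρtr hσ hσtr hα, fun h => ?_, ?_⟩
  · by_contra hne
    exact (hAlpha_pos_of_ne hρ hρtr hσ hσtr hα hne).ne' h
  · rintro rfl
    exact hAlpha_self hρ hρtr hα.le
end

section
/- Let ρ and σ be density matrices on ℂ^n. Then lim_{α→1⁺} H_α(ρ‖σ) = (1/(2 ln 2))·‖ρ − σ‖₁, where ‖·‖₁ denotes the trace norm. -/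
open scoped ComplexOrder

/-- The trace norm of a matrix, `‖A‖₁ = Tr[√(AᴴA)]` (for Hermitian `A` this is
`Tr[A₊] + Tr[A₋]`, the sum of the absolute values of the eigenvalues). -/
noncomputable def traceNorm {n : ℕ} (A : Matrix (Fin n) (Fin n) ℂ) : ℝ :=
  (((Matrix.posSemidef_conjTranspose_mul_self A).isHermitian.eigenvectorUnitary :
      Matrix (Fin n) (Fin n) ℂ) *
    Matrix.diagonal (fun i => ((Real.sqrt
      ((Matrix.posSemidef_conjTranspose_mul_self A).isHermitian.eigenvalues i) : ℝ) : ℂ)) *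
    (star (Matrix.posSemidef_conjTranspose_mul_self A).isHermitian.eigenvectorUnitary :
      Matrix (Fin n) (Fin n) ℂ)).trace.re

/-!
Write `A = ρ - σ` and `T = Tr A₊`; since `Tr A = 0`, `‖A‖₁ = 2T`. For an effect `α⁻¹ ≤ E ≤ 1`,
`Tr[Eρ]/Tr[Eσ] = 1 + Tr[(E - α⁻¹)A]/Tr[Eσ]`, where `Tr[Eσ] ≥ α⁻¹` and, because
`0 ≤ E - α⁻¹ ≤ 1 - α⁻¹`, `Tr[(E - α⁻¹)A] ≤ (1 - α⁻¹)T`; hence `sup_α ≤ 1 + (α - 1)T`.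
The effect `α⁻¹ + (1 - α⁻¹)P`, with `P` the spectral projection onto the positive part of `A`,
gives `sup_α ≥ 1 + (1 - α⁻¹)T`. After taking `(α/(α-1)) log₂`, both bounds are of the form
`x log(1 + T/x) / ln 2` with `x → ∞` (up to a factor `α → 1`), so both tend to `T / ln 2`.
-/

open scoped MatrixOrder
open Filter Topology

namespace Matrix

variable {ι 𝕜 : Type*} [Fintype ι] [DecidableEq ι] [RCLike 𝕜]

lemma trace_mul_nonneg {P Q : Matrix ι ι 𝕜} (hP : 0 ≤ P) (hQ : 0 ≤ Q) :
    0 ≤ (P * Q).trace := by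
  have hsqrt : (P * Q).trace = (CFC.sqrt P * Q * CFC.sqrt P).trace := by
    rw [trace_mul_cycle, CFC.sqrt_mul_sqrt_self P]
  rw [hsqrt]
  exact (nonneg_iff_posSemidef.mp
    (conjugate_nonneg_of_nonneg hQ (CFC.sqrt_nonneg P))).trace_nonneg

lemma trace_mul_le_trace_mul_of_le {P P' Q : Matrix ι ι 𝕜} (hP : P ≤ P') (hQ : 0 ≤ Q) :
    (P * Q).trace ≤ (P' * Q).trace := by
  simpa [sub_mul, trace_sub] using trace_mul_nonneg (sub_nonneg.mpr hP) hQ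

lemma trace_mul_le_mul_trace_posPart {A G : Matrix ι ι 𝕜} (hA : A.IsHermitian)
    (hG₀ : 0 ≤ G) {c : ℝ} (hG : G ≤ (c : 𝕜) • 1) :
    (G * A).trace ≤ c * (A⁺).trace := by
  have hA' : IsSelfAdjoint A := hA
  calc (G * A).trace = (G * A⁺).trace - (G * A⁻).trace := by
        rw [← trace_sub, ← mul_sub, CFC.posPart_sub_negPart A]
    _ ≤ (G * A⁺).trace := sub_le_self _ (trace_mul_nonneg hG₀ (CFC.negPart_nonneg A))
    _ ≤ (((c : 𝕜) • 1) * A⁺).trace := trace_mul_le_trace_mul_of_le hG (CFC.posPart_nonneg A)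
    _ = c * (A⁺).trace := by simp [RCLike.real_smul_eq_coe_mul]

lemma IsHermitian.continuousOn_spectrum {A : Matrix ι ι 𝕜} (hA : A.IsHermitian) (f : ℝ → ℝ) :
    ContinuousOn f (spectrum ℝ A) :=
  (hA.spectrum_real_eq_range_eigenvalues ▸ Set.finite_range _).continuousOn f

lemma IsHermitian.exists_mul_eq_posPart {A : Matrix ι ι 𝕜} (hA : A.IsHermitian) :
    ∃ P : Matrix ι ι 𝕜, 0 ≤ P ∧ P ≤ 1 ∧ P * A = A⁺ := by
  have hA' : IsSelfAdjoint A := hA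
  let f : ℝ → ℝ := fun x => if 0 < x then 1 else 0
  refine ⟨cfc f A, cfc_nonneg fun x _ => by positivity,
    cfc_le_one f A fun x _ => ?_, ?_⟩
  · by_cases hx : 0 < x <;> simp [f, hx]
  · nth_rewrite 2 [← cfc_id' ℝ A]
    rw [← cfc_mul _ _ A (hA.continuousOn_spectrum _) (hA.continuousOn_spectrum _),
      CFC.posPart_def, cfcₙ_eq_cfc]
    refine cfc_congr fun x _ => ?_
    by_cases hx : 0 < x
    · simp [f, hx, posPart_of_nonneg hx.le]
    · simp [f, hx, posPart_eq_zero.mpr (not_lt.mp hx)]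

lemma re_trace_posPart_nonneg (A : Matrix ι ι ℂ) : 0 ≤ (A⁺).trace.re :=
  RCLike.re_le_re (nonneg_iff_posSemidef.mp (CFC.posPart_nonneg A)).trace_nonneg

end Matrix

section Effect

variable {ι : Type*} [Fintype ι] [DecidableEq ι] {ρ σ E : Matrix ι ι ℂ} {c : ℝ}

lemma le_re_trace_mul (hσ : 0 ≤ σ) (hσtr : σ.trace = 1) (hE : (c : ℂ) • 1 ≤ E) :
    c ≤ (E * σ).trace.re := by
  simpa [hσtr] using RCLike.re_le_re (Matrix.trace_mul_le_trace_mul_of_le hE hσ)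

lemma re_trace_mul_le_one (hσ : 0 ≤ σ) (hσtr : σ.trace = 1) (hE : E ≤ 1) :
    (E * σ).trace.re ≤ 1 := by
  simpa [hσtr] using RCLike.re_le_re (Matrix.trace_mul_le_trace_mul_of_le hE hσ)

lemma re_trace_mul_sub_le (hA : (ρ - σ).IsHermitian) (htr : ρ.trace = σ.trace)
    (hcE : (c : ℂ) • 1 ≤ E) (hE : E ≤ 1) :
    (E * (ρ - σ)).trace.re ≤ (1 - c) * ((ρ - σ)⁺).trace.re := by
  have hG : E - (c : ℂ) • 1 ≤ ((1 - c : ℝ) : ℂ) • 1 := by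
    rw [← sub_nonneg]
    convert sub_nonneg.mpr hE using 1
    push_cast
    module
  have hshift : (E * (ρ - σ)).trace = ((E - (c : ℂ) • 1) * (ρ - σ)).trace := by
    simp [sub_mul, Matrix.trace_sub, htr]
  rw [hshift]
  exact (RCLike.re_le_re
    (Matrix.trace_mul_le_mul_trace_posPart hA (sub_nonneg.mpr hcE) hG)).trans_eq
      (Complex.re_ofReal_mul _ _)

end Effect

section SupAlpha

variable {n : ℕ} {ρ σ : Matrix (Fin n) (Fin n) ℂ} {α : ℝ}

lemma re_trace_mul_div_le_one_add (hα : 1 < α) (hA : (ρ - σ).IsHermitian) (hσ : 0 ≤ σ)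
    (hρtr : ρ.trace = 1) (hσtr : σ.trace = 1) {E : Matrix (Fin n) (Fin n) ℂ}
    (hcE : ((α⁻¹ : ℝ) : ℂ) • 1 ≤ E) (hE : E ≤ 1) :
    (E * ρ).trace.re / (E * σ).trace.re ≤ 1 + (α - 1) * ((ρ - σ)⁺).trace.re := by
  set T := ((ρ - σ)⁺).trace.re
  have hc0 : 0 < α⁻¹ := by positivity
  have hd := le_re_trace_mul hσ hσtr hcE
  have hAE : (E * (ρ - σ)).trace.re ≤ (α - 1) * T * (E * σ).trace.re :=
    calc (E * (ρ - σ)).trace.re ≤ (1 - α⁻¹) * T :=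
          re_trace_mul_sub_le hA (hρtr.trans hσtr.symm) hcE hE
      _ = (α - 1) * T * α⁻¹ := by field_simp
      _ ≤ (α - 1) * T * (E * σ).trace.re := mul_le_mul_of_nonneg_left hd
          (mul_nonneg (sub_nonneg.mpr hα.le) (Matrix.re_trace_posPart_nonneg _))
  have hsplit : (E * ρ).trace.re = (E * σ).trace.re + (E * (ρ - σ)).trace.re := by
    simp [mul_sub, Matrix.trace_sub]
  rw [hsplit, div_le_iff₀ (hc0.trans_le hd)]
  linarith

lemma supAlpha_le (hα : 1 < α) (hA : (ρ - σ).IsHermitian) (hσ : 0 ≤ σ)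
    (hρtr : ρ.trace = 1) (hσtr : σ.trace = 1) :
    supAlpha α ρ σ ≤ 1 + (α - 1) * ((ρ - σ)⁺).trace.re := by
  have hone : ((α⁻¹ : ℝ) : ℂ) • 1 ≤ (1 : Matrix (Fin n) (Fin n) ℂ) := by
    have h : (1 : Matrix (Fin n) (Fin n) ℂ) - ((α⁻¹ : ℝ) : ℂ) • 1 =
        ((1 - α⁻¹ : ℝ) : ℂ) • 1 := by
      push_cast
      module
    rw [Matrix.le_iff, h]
    exact Matrix.PosSemidef.one.smul
      (Complex.zero_le_real.mpr (sub_nonneg.mpr (inv_le_one_of_one_le₀ hα.le)))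
  refine csSup_le ⟨1, 1, hone, by simpa using Matrix.PosSemidef.zero, by simp [hρtr, hσtr]⟩ ?_
  rintro _ ⟨E, hcE, hE, rfl⟩
  exact re_trace_mul_div_le_one_add hα hA hσ hρtr hσtr hcE hE

lemma one_add_le_supAlpha (hα : 1 < α) (hA : (ρ - σ).IsHermitian) (hσ : 0 ≤ σ)
    (hρtr : ρ.trace = 1) (hσtr : σ.trace = 1) :
    1 + (1 - α⁻¹) * ((ρ - σ)⁺).trace.re ≤ supAlpha α ρ σ := by
  obtain ⟨P, hP0, hP1, hPA⟩ := hA.exists_mul_eq_posPart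
  have hδ : (0 : ℂ) ≤ ((1 - α⁻¹ : ℝ) : ℂ) :=
    Complex.zero_le_real.mpr (sub_nonneg.mpr (inv_le_one_of_one_le₀ hα.le))
  set E := ((α⁻¹ : ℝ) : ℂ) • 1 + ((1 - α⁻¹ : ℝ) : ℂ) • P with hEdef
  have hcE : ((α⁻¹ : ℝ) : ℂ) • 1 ≤ E := by
    rw [Matrix.le_iff, hEdef, add_sub_cancel_left]
    exact (Matrix.nonneg_iff_posSemidef.mp hP0).smul hδ
  have hE : E ≤ 1 := by
    have h : 1 - E = ((1 - α⁻¹ : ℝ) : ℂ) • (1 - P) := by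
      rw [hEdef]; push_cast; module
    rw [Matrix.le_iff, h]
    exact (Matrix.nonneg_iff_posSemidef.mp (sub_nonneg.mpr hP1)).smul hδ
  have hEA : (E * (ρ - σ)).trace.re = (1 - α⁻¹) * ((ρ - σ)⁺).trace.re := by
    simp [hEdef, add_mul, Matrix.trace_add, hPA, Matrix.trace_sub, hρtr, hσtr]
  have hd0 := le_re_trace_mul hσ hσtr hcE
  have hd1 := re_trace_mul_le_one hσ hσtr hE
  have hδT : 0 ≤ (1 - α⁻¹) * ((ρ - σ)⁺).trace.re := mul_nonneg
    (sub_nonneg.mpr (inv_le_one_of_one_le₀ hα.le)) (Matrix.re_trace_posPart_nonneg _)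
  calc 1 + (1 - α⁻¹) * ((ρ - σ)⁺).trace.re ≤ (E * ρ).trace.re / (E * σ).trace.re := by
        have hsplit : (E * ρ).trace.re = (E * σ).trace.re + (E * (ρ - σ)).trace.re := by
          simp [mul_sub, Matrix.trace_sub]
        rw [hsplit, hEA, le_div_iff₀ ((inv_pos.mpr (by linarith)).trans_le hd0)]
        nlinarith [mul_nonneg hδT (sub_nonneg.mpr hd1)]
    _ ≤ supAlpha α ρ σ := by
        refine le_csSup ⟨1 + (α - 1) * ((ρ - σ)⁺).trace.re, ?_⟩ ⟨E, hcE, hE, rfl⟩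
        rintro _ ⟨E', hcE', hE', rfl⟩
        exact re_trace_mul_div_le_one_add hα hA hσ hρtr hσtr hcE' hE'

end SupAlpha

lemma traceNorm_eq_re_trace_abs {n : ℕ} (A : Matrix (Fin n) (Fin n) ℂ) :
    traceNorm A = (CFC.abs A).trace.re := by
  rw [CFC.abs, CFC.sqrt_eq_real_sqrt _ (star_mul_self_nonneg A), Matrix.star_eq_conjTranspose,
    cfcₙ_eq_cfc, (Matrix.posSemidef_conjTranspose_mul_self A).isHermitian.cfc_eq,
    Matrix.IsHermitian.cfc, Unitary.conjStarAlgAut_apply]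
  rfl

lemma traceNorm_eq_two_mul_re_trace_posPart {n : ℕ} {A : Matrix (Fin n) (Fin n) ℂ}
    (hA : A.IsHermitian) (htr : A.trace = 0) : traceNorm A = 2 * (A⁺).trace.re := by
  have hA' : IsSelfAdjoint A := hA
  rw [traceNorm_eq_re_trace_abs, ← add_zero (CFC.abs A).trace, ← htr, ← Matrix.trace_add,
    CFC.abs_add_self A, two_nsmul, Matrix.trace_add, Complex.add_re, two_mul]

section Limit

open Real

lemma tendsto_inv_sub_one_nhdsGT_one : Tendsto (fun α : ℝ => (α - 1)⁻¹) (𝓝[>] 1) atTop := by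
  refine tendsto_inv_nhdsGT_zero.comp (tendsto_nhdsWithin_iff.mpr ⟨?_, ?_⟩)
  · exact ((continuous_sub_right 1).tendsto' 1 0 (sub_self 1)).mono_left nhdsWithin_le_nhds
  · exact eventually_nhdsWithin_of_forall fun α (hα : 1 < α) => sub_pos.mpr hα

lemma tendsto_div_sub_one_mul_logb_of_le_of_le {f : ℝ → ℝ} {T : ℝ} (hT : 0 ≤ T)
    (hlow : ∀ α, 1 < α → 1 + (1 - α⁻¹) * T ≤ f α)
    (hupp : ∀ α, 1 < α → f α ≤ 1 + (α - 1) * T) :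
    Tendsto (fun α => α / (α - 1) * logb 2 (f α)) (𝓝[>] 1) (𝓝 (T / log 2)) := by
  have hx : Tendsto (fun α : ℝ => α / (α - 1)) (𝓝[>] 1) atTop := by
    refine (tendsto_atTop_add_const_left _ 1 tendsto_inv_sub_one_nhdsGT_one).congr' ?_
    filter_upwards [self_mem_nhdsWithin] with α (hα : 1 < α)
    field_simp [(sub_pos.mpr hα).ne']
    ring
  have hlim₁ : Tendsto (fun α => α / (α - 1) * logb 2 (1 + (1 - α⁻¹) * T)) (𝓝[>] 1)
      (𝓝 (T / log 2)) := by
    refine (((tendsto_mul_log_one_add_div_atTop T).comp hx).div_const (log 2)).congr' ?_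
    filter_upwards [self_mem_nhdsWithin] with α (hα : 1 < α)
    have h0 : α - 1 ≠ 0 := (sub_pos.mpr hα).ne'
    simp only [Function.comp, logb]
    field_simp
  have hlim₂ : Tendsto (fun α => α / (α - 1) * logb 2 (1 + (α - 1) * T)) (𝓝[>] 1)
      (𝓝 (T / log 2)) := by
    have hy := (tendsto_mul_log_one_add_div_atTop T).comp tendsto_inv_sub_one_nhdsGT_one
    have h := ((tendsto_id.mono_left nhdsWithin_le_nhds).mul hy).div_const (log 2)
    rw [one_mul] at h
    refine h.congr' ?_
    filter_upwards [self_mem_nhdsWithin] with α (hα : 1 < α)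
    have h0 : α - 1 ≠ 0 := (sub_pos.mpr hα).ne'
    simp only [Function.comp, logb, id]
    field_simp
  refine tendsto_of_tendsto_of_tendsto_of_le_of_le' hlim₁ hlim₂ ?_ ?_
  all_goals
    filter_upwards [self_mem_nhdsWithin] with α (hα : 1 < α)
    have hlow_pos : 0 < 1 + (1 - α⁻¹) * T := add_pos_of_pos_of_nonneg one_pos
      (mul_nonneg (sub_nonneg.mpr (inv_le_one_of_one_le₀ hα.le)) hT)
    refine mul_le_mul_of_nonneg_left (logb_le_logb_of_le one_lt_two ?_ ?_) (by positivity)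
  · exact hlow_pos
  · exact hlow α hα
  · exact hlow_pos.trans_le (hlow α hα)
  · exact hupp α hα

end Limit

/-- For density matrices `ρ, σ` on `ℂ^n`,
`lim_{α→1⁺} H_α(ρ‖σ) = (1/(2 ln 2))·‖ρ - σ‖₁`. -/
theorem hilbert_alpha_divergence_tendsto_traceDist
    {n : ℕ} (ρ σ : Matrix (Fin n) (Fin n) ℂ)
    (hρ : ρ.PosSemidef) (hρtr : ρ.trace = 1)
    (hσ : σ.PosSemidef) (hσtr : σ.trace = 1) :
    Filter.Tendsto (fun α : ℝ => HAlpha α ρ σ) (nhdsWithin 1 (Set.Ioi 1))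
      (nhds ((1 / (2 * Real.log 2)) * traceNorm (ρ - σ))) := by
  have hA : (ρ - σ).IsHermitian := hρ.1.sub hσ.1
  have hnorm :
      (1 / (2 * Real.log 2)) * traceNorm (ρ - σ) = ((ρ - σ)⁺).trace.re / Real.log 2 := by
    rw [traceNorm_eq_two_mul_re_trace_posPart hA (by rw [Matrix.trace_sub, hρtr, hσtr, sub_self])]
    field_simp
  rw [hnorm]
  exact tendsto_div_sub_one_mul_logb_of_le_of_le (Matrix.re_trace_posPart_nonneg _)
    (fun α hα => one_add_le_supAlpha hα hA hσ.nonneg hρtr hσtr)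
    (fun α hα => supAlpha_le hα hA hσ.nonneg hρtr hσtr)
end

section
/- Let γ = Z⁻¹·Σ_{x=1}^{d} e^{−βE_x}|x⟩⟨x| be a Gibbs state on ℂ^d, let ρ and σ be density matrices on ℂ^d with supp(ρ) = supp(σ) = span{|1⟩,|2⟩}, and let γ⁽²⁾ := p|1⟩⟨1| + (1−p)|2⟩⟨2| with p = e^{−βE₁}/(e^{−βE₁} + e^{−βE₂}) be the renormalized restriction of γ to this subspace. Then there exists a completely positive trace-preserving map Φ on d×d matrices with Φ(ρ) = σ and Φ(γ) = γ if and only if there exists a completely positive trace-preserving map ℰ on 2×2 matrices with ℰ(ρ) = σ and ℰ(γ⁽²⁾) = γ⁽²⁾ (where ρ, σ are identified with their 2×2 restrictions to span{|1⟩,|2⟩}). -/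
open scoped ComplexOrder

/-- A linear map `Φ` between matrix algebras is completely positive if its tensor
extension `id_k ⊗ Φ` is positive for every `k`. -/
def IsCompletelyPositive {d m : ℕ}
    (Φ : Matrix (Fin d) (Fin d) ℂ →ₗ[ℂ] Matrix (Fin m) (Fin m) ℂ) : Prop :=
  ∀ (k : ℕ) (M : Matrix (Fin k × Fin d) (Fin k × Fin d) ℂ), M.PosSemidef →
    (Matrix.of fun (r s : Fin k × Fin m) =>
      Φ (Matrix.of fun a b => M (r.1, a) (s.1, b)) r.2 s.2).PosSemidef

/-- The `2×2` restriction of a `d×d` matrix to the subspace spanned by the first two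
basis vectors `|1⟩, |2⟩`. -/
def restrict2 {d : ℕ} (hd : 2 ≤ d) (A : Matrix (Fin d) (Fin d) ℂ) :
    Matrix (Fin 2) (Fin 2) ℂ :=
  Matrix.of fun i j => A (Fin.castLE hd i) (Fin.castLE hd j)

/-!
Let `V` be a coisometry (`V * Vᴴ = 1`) onto the two-level subspace, `P = Vᴴ * V` and
`Q = 1 - P`. Since `γ` commutes with `P` it splits as `P γ P + Q γ Q`, so a channel `ℰ` on the
subspace extends to the channel `A ↦ Vᴴ ℰ(V A Vᴴ) V + Q A Q`. Conversely, let `Φ` be a channel on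
the full space and `G = Φ (P γ P)`. As `ρ` is invertible on the subspace, `P γ P ≤ t ρ` for some
`t`, hence `G ≤ t σ` and `G` has no weight on `Q`. So `R = Φ (Q γ Q) = γ - G` is a positive matrix
whose `Q`-block already carries its whole trace `Tr (Q γ Q)`; its `P`-block therefore vanishes and
`V G Vᴴ = V γ Vᴴ`. Composing `Φ` with `X ↦ Vᴴ X V` on one side and with
`B ↦ V B Vᴴ + Tr (Q B Q) τ`, for any state `τ`, on the other gives the channel on the subspace.
-/

open Matrix
open scoped Kronecker

section

variable {d m n : ℕ}

noncomputable def conjMap (V : Matrix (Fin m) (Fin d) ℂ) :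
    Matrix (Fin d) (Fin d) ℂ →ₗ[ℂ] Matrix (Fin m) (Fin m) ℂ :=
  mulRightLinearMap (Fin m) ℂ Vᴴ ∘ₗ mulLeftLinearMap (Fin d) ℂ V

@[simp]
lemma conjMap_apply (V : Matrix (Fin m) (Fin d) ℂ) (A : Matrix (Fin d) (Fin d) ℂ) :
    conjMap V A = V * A * Vᴴ := rfl

noncomputable def traceSmul (τ : Matrix (Fin m) (Fin m) ℂ) :
    Matrix (Fin d) (Fin d) ℂ →ₗ[ℂ] Matrix (Fin m) (Fin m) ℂ :=
  (traceLinearMap (Fin d) ℂ ℂ).smulRight τ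

@[simp]
lemma traceSmul_apply (τ : Matrix (Fin m) (Fin m) ℂ) (A : Matrix (Fin d) (Fin d) ℂ) :
    traceSmul τ A = A.trace • τ := rfl

namespace IsCompletelyPositive

variable {e : ℕ} {Φ Ψ : Matrix (Fin d) (Fin d) ℂ →ₗ[ℂ] Matrix (Fin m) (Fin m) ℂ}

lemma add (hΦ : IsCompletelyPositive Φ) (hΨ : IsCompletelyPositive Ψ) :
    IsCompletelyPositive (Φ + Ψ) :=
  fun k M hM => (hΦ k M hM).add (hΨ k M hM)

lemma comp {Θ : Matrix (Fin m) (Fin m) ℂ →ₗ[ℂ] Matrix (Fin e) (Fin e) ℂ}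
    (hΘ : IsCompletelyPositive Θ) (hΦ : IsCompletelyPositive Φ) :
    IsCompletelyPositive (Θ ∘ₗ Φ) :=
  fun k M hM => hΘ k _ (hΦ k M hM)

lemma map_posSemidef (hΦ : IsCompletelyPositive Φ) {A : Matrix (Fin d) (Fin d) ℂ}
    (hA : A.PosSemidef) : (Φ A).PosSemidef :=
  (hΦ 1 (A.submatrix Prod.snd Prod.snd) (hA.submatrix _)).submatrix fun i => (0, i)

end IsCompletelyPositive

lemma isCompletelyPositive_conjMap (V : Matrix (Fin m) (Fin d) ℂ) :
    IsCompletelyPositive (conjMap V) := by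
  intro k M hM
  convert hM.mul_mul_conjTranspose_same ((1 : Matrix (Fin k) (Fin k) ℂ) ⊗ₖ V) using 1
  ext r s
  simp [mul_apply, kroneckerMap_apply, one_apply, Fintype.sum_prod_type, Finset.sum_mul,
    apply_ite (starRingEnd ℂ), mul_ite]

lemma isCompletelyPositive_traceSmul {τ : Matrix (Fin m) (Fin m) ℂ} (hτ : τ.PosSemidef) :
    IsCompletelyPositive (traceSmul (d := d) τ) := by
  intro k M hM
  have hblock : (of fun r s : Fin k × Fin m =>
      traceSmul τ (of fun a b => M (r.1, a) (s.1, b)) r.2 s.2) =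
      (∑ a, M.submatrix (fun r : Fin k => (r, a)) (fun r => (r, a))) ⊗ₖ τ := by
    ext r s
    simp [kroneckerMap_apply, trace, Matrix.sum_apply, Finset.sum_mul]
  rw [hblock]
  exact (posSemidef_sum _ fun a _ => hM.submatrix _).kronecker hτ

lemma Matrix.PosDef.exists_smul_sub_posSemidef {ι : Type*} [Fintype ι] [DecidableEq ι]
    {A B : Matrix ι ι ℂ} (hA : A.PosDef) (hB : B.PosSemidef) :
    ∃ t : ℝ, (t • A - B).PosSemidef := by
  -- `X ≤ Y` below is the Loewner order, which unfolds to `(Y - X).PosSemidef`.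
  open scoped MatrixOrder Matrix.Norms.L2Operator in
  rcases subsingleton_or_nontrivial (Matrix ι ι ℂ) with _ | _
  · exact ⟨0, Subsingleton.elim 0 ((0 : ℝ) • A - B) ▸ .zero⟩
  obtain ⟨r, hr, hrA⟩ := (CFC.exists_pos_algebraMap_le_iff hA.isHermitian).2
    fun x hx => (isStrictlyPositive_iff_posDef.2 hA).spectrum_pos hx
  have hB' : B ≤ algebraMap ℝ _ ‖B‖ := IsSelfAdjoint.le_algebraMap_norm_self hB.isHermitian
  refine ⟨‖B‖ / r, hB'.trans ?_⟩
  calc algebraMap ℝ _ ‖B‖ = (‖B‖ / r) • algebraMap ℝ _ r := by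
        rw [Algebra.smul_def, ← map_mul, div_mul_cancel₀ _ hr.ne']
    _ ≤ (‖B‖ / r) • A := smul_le_smul_of_nonneg_left hrA (by positivity)

lemma IsIdempotentElem.mul_mul_self_of_commute {R : Type*} [Semigroup R] {p a : R}
    (hp : IsIdempotentElem p) (ha : Commute p a) : p * a * p = p * a := by
  rw [mul_assoc, ← ha.eq, ← mul_assoc, hp.eq]

section Coisometry

variable {V : Matrix (Fin n) (Fin d) ℂ}

lemma isIdempotentElem_conjTranspose_mul_self (hV : V * Vᴴ = 1) :
    IsIdempotentElem (Vᴴ * V) := by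
  rw [IsIdempotentElem, Matrix.mul_assoc, ← Matrix.mul_assoc V, hV, Matrix.one_mul]

lemma isHermitian_one_sub_conjTranspose_mul_self : (1 - Vᴴ * V).IsHermitian := by
  simp [IsHermitian, conjTranspose_sub]

lemma conjTranspose_mul_self_mul_conjTranspose (hV : V * Vᴴ = 1) : Vᴴ * V * Vᴴ = Vᴴ := by
  rw [Matrix.mul_assoc, hV, Matrix.mul_one]

lemma one_sub_conjTranspose_mul_self_mul (hV : V * Vᴴ = 1) : (1 - Vᴴ * V) * Vᴴ = 0 := by
  rw [Matrix.sub_mul, Matrix.one_mul, conjTranspose_mul_self_mul_conjTranspose hV, sub_self]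

lemma trace_conjTranspose_mul_mul (hV : V * Vᴴ = 1) (X : Matrix (Fin n) (Fin n) ℂ) :
    (Vᴴ * X * V).trace = X.trace := by
  rw [trace_mul_cycle, hV, Matrix.one_mul]

lemma trace_compress_add_trace_compress_compl (hV : V * Vᴴ = 1)
    (A : Matrix (Fin d) (Fin d) ℂ) :
    (V * A * Vᴴ).trace + ((1 - Vᴴ * V) * A * (1 - Vᴴ * V)).trace = A.trace := by
  have hQAQ : ((1 - Vᴴ * V) * A * (1 - Vᴴ * V)).trace = ((1 - Vᴴ * V) * A).trace := by
    rw [trace_mul_cycle, (isIdempotentElem_conjTranspose_mul_self hV).one_sub.eq]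
  rw [trace_mul_cycle, hQAQ, ← trace_add, ← Matrix.add_mul, add_sub_cancel, Matrix.one_mul]

lemma compress_add_compress_compl (hV : V * Vᴴ = 1) {A : Matrix (Fin d) (Fin d) ℂ}
    (hA : Commute (Vᴴ * V) A) :
    Vᴴ * (V * A * Vᴴ) * V + (1 - Vᴴ * V) * A * (1 - Vᴴ * V) = A := by
  have hP := isIdempotentElem_conjTranspose_mul_self hV
  rw [show Vᴴ * (V * A * Vᴴ) * V = Vᴴ * V * A * (Vᴴ * V) by simp only [Matrix.mul_assoc],
    hP.mul_mul_self_of_commute hA,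
    hP.one_sub.mul_mul_self_of_commute ((Commute.one_left A).sub_left hA), ← Matrix.add_mul,
    add_sub_cancel, Matrix.one_mul]

lemma compress_compl_eq_zero (hV : V * Vᴴ = 1) {A : Matrix (Fin d) (Fin d) ℂ}
    (hA : Vᴴ * (V * A * Vᴴ) * V = A) : (1 - Vᴴ * V) * A * (1 - Vᴴ * V) = 0 := by
  rw [← hA]
  simp only [← Matrix.mul_assoc, one_sub_conjTranspose_mul_self_mul hV, Matrix.zero_mul]

lemma conjTranspose_mul_compress_mul_eq_of_range_le (hV : V * Vᴴ = 1)
    {A : Matrix (Fin d) (Fin d) ℂ} (hA : A.IsHermitian)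
    (hrange : LinearMap.range (toLin' A) ≤ LinearMap.range (toLin' Vᴴ)) :
    Vᴴ * (V * A * Vᴴ) * V = A := by
  have hPA : Vᴴ * V * A = A := by
    refine toLin'.injective (LinearMap.ext fun x => ?_)
    obtain ⟨y, hy⟩ := hrange ⟨x, rfl⟩
    simp only [toLin'_apply] at hy ⊢
    rw [← mulVec_mulVec, ← hy, mulVec_mulVec, conjTranspose_mul_self_mul_conjTranspose hV]
  have hAP : A * (Vᴴ * V) = A := by
    simpa [conjTranspose_mul, hA.eq, Matrix.mul_assoc] using congrArg conjTranspose hPA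
  rw [show Vᴴ * (V * A * Vᴴ) * V = Vᴴ * V * A * (Vᴴ * V) by simp only [Matrix.mul_assoc],
    hPA, hAP]

lemma posDef_compress_of_range_le (hV : V * Vᴴ = 1) {A : Matrix (Fin d) (Fin d) ℂ}
    (hA : A.PosSemidef) (hAV : Vᴴ * (V * A * Vᴴ) * V = A)
    (hrange : LinearMap.range (toLin' Vᴴ) ≤ LinearMap.range (toLin' A)) :
    (V * A * Vᴴ).PosDef := by
  refine (hA.mul_mul_conjTranspose_same V).posDef_iff_isUnit.2
    (mulVec_surjective_iff_isUnit.1 fun y => ?_)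
  obtain ⟨u, hu⟩ := hrange ⟨y, rfl⟩
  simp only [toLin'_apply] at hu
  have hVAP : V * A * Vᴴ * V = V * A := by
    conv_rhs => rw [← hAV]
    simp only [← Matrix.mul_assoc, hV, Matrix.one_mul]
  refine ⟨V *ᵥ u, ?_⟩
  rw [mulVec_mulVec, hVAP, ← mulVec_mulVec, hu, mulVec_mulVec, hV, one_mulVec]

lemma trace_compl_map_dilate_compress_eq_zero (hV : V * Vᴴ = 1)
    {γ ρ σ : Matrix (Fin d) (Fin d) ℂ} (hγ : γ.PosSemidef)
    (hρ : Vᴴ * (V * ρ * Vᴴ) * V = ρ) (hρV : (V * ρ * Vᴴ).PosDef)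
    (hσ : Vᴴ * (V * σ * Vᴴ) * V = σ)
    {Φ : Matrix (Fin d) (Fin d) ℂ →ₗ[ℂ] Matrix (Fin d) (Fin d) ℂ}
    (hΦ : IsCompletelyPositive Φ) (hΦρ : Φ ρ = σ) :
    ((1 - Vᴴ * V) * Φ (Vᴴ * (V * γ * Vᴴ) * V) * (1 - Vᴴ * V)).trace = 0 := by
  set Q := 1 - Vᴴ * V
  have hQH : Qᴴ = Q := isHermitian_one_sub_conjTranspose_mul_self
  have hQσ : Q * σ * Q = 0 := compress_compl_eq_zero hV hσ
  clear_value Q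
  obtain ⟨t, ht⟩ := hρV.exists_smul_sub_posSemidef (hγ.mul_mul_conjTranspose_same V)
  set G := Φ (Vᴴ * (V * γ * Vᴴ) * V)
  have hG : G.PosSemidef :=
    hΦ.map_posSemidef ((hγ.mul_mul_conjTranspose_same V).conjTranspose_mul_mul_same V)
  have hσG : (t • σ - G).PosSemidef := by
    have := hΦ.map_posSemidef (ht.conjTranspose_mul_mul_same V)
    rwa [Matrix.mul_sub, Matrix.sub_mul, Matrix.mul_smul, Matrix.smul_mul, hρ, map_sub,
      LinearMap.map_smul_of_tower, hΦρ] at this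
  have hG₀ := (hG.mul_mul_conjTranspose_same Q).trace_nonneg
  have hσG₀ := (hσG.mul_mul_conjTranspose_same Q).trace_nonneg
  rw [hQH] at hG₀ hσG₀
  rw [Matrix.mul_sub, Matrix.sub_mul, trace_sub, Matrix.mul_smul, Matrix.smul_mul, hQσ,
    smul_zero, trace_zero, zero_sub, neg_nonneg] at hσG₀
  exact le_antisymm hσG₀ hG₀

lemma compress_map_dilate_compress_eq (hV : V * Vᴴ = 1) {γ : Matrix (Fin d) (Fin d) ℂ}
    (hγ : γ.PosSemidef) (hγV : Commute (Vᴴ * V) γ)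
    {Φ : Matrix (Fin d) (Fin d) ℂ →ₗ[ℂ] Matrix (Fin d) (Fin d) ℂ}
    (hΦ : IsCompletelyPositive Φ) (hΦtr : ∀ A, (Φ A).trace = A.trace) (hΦγ : Φ γ = γ)
    (hQG : ((1 - Vᴴ * V) * Φ (Vᴴ * (V * γ * Vᴴ) * V) * (1 - Vᴴ * V)).trace = 0) :
    V * Φ (Vᴴ * (V * γ * Vᴴ) * V) * Vᴴ = V * γ * Vᴴ := by
  set Q := 1 - Vᴴ * V
  have hQH : Qᴴ = Q := isHermitian_one_sub_conjTranspose_mul_self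
  have hγsplit : Vᴴ * (V * γ * Vᴴ) * V + Q * γ * Q = γ :=
    compress_add_compress_compl hV hγV
  have htr : (V * Φ (Q * γ * Q) * Vᴴ).trace + (Q * Φ (Q * γ * Q) * Q).trace =
      (Φ (Q * γ * Q)).trace :=
    trace_compress_add_trace_compress_compl hV _
  clear_value Q
  set G := Φ (Vᴴ * (V * γ * Vᴴ) * V)
  set R := Φ (Q * γ * Q) with hR
  have hRpos : R.PosSemidef := hΦ.map_posSemidef <| by
    simpa only [hQH] using hγ.mul_mul_conjTranspose_same Q
  have hγGR : γ = G + R := by conv_lhs => rw [← hΦγ, ← hγsplit, map_add]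
  have hVRV : V * R * Vᴴ = 0 := by
    refine (hRpos.mul_mul_conjTranspose_same V).trace_eq_zero_iff.1 ?_
    have hQRQ : (Q * R * Q).trace = (Q * γ * Q).trace := by
      rw [eq_sub_of_add_eq' hγGR.symm, Matrix.mul_sub, Matrix.sub_mul, trace_sub, hQG, sub_zero]
    rwa [hQRQ, hR, hΦtr, add_eq_right] at htr
  conv_rhs => rw [hγGR, Matrix.mul_add, Matrix.add_mul, hVRV, add_zero]

theorem exists_compressed_channel (hV : V * Vᴴ = 1) {γ ρ σ : Matrix (Fin d) (Fin d) ℂ}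
    (hγ : γ.PosSemidef) (hγV : Commute (Vᴴ * V) γ)
    (hρ : Vᴴ * (V * ρ * Vᴴ) * V = ρ) (hρV : (V * ρ * Vᴴ).PosDef)
    (hσ : Vᴴ * (V * σ * Vᴴ) * V = σ)
    {τ : Matrix (Fin n) (Fin n) ℂ} (hτ : τ.PosSemidef) (hτtr : τ.trace = 1)
    {Φ : Matrix (Fin d) (Fin d) ℂ →ₗ[ℂ] Matrix (Fin d) (Fin d) ℂ}
    (hΦ : IsCompletelyPositive Φ)
    (hΦtr : ∀ A, (Φ A).trace = A.trace) (hΦρ : Φ ρ = σ) (hΦγ : Φ γ = γ) :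
    ∃ ℰ : Matrix (Fin n) (Fin n) ℂ →ₗ[ℂ] Matrix (Fin n) (Fin n) ℂ,
      IsCompletelyPositive ℰ ∧ (∀ A, (ℰ A).trace = A.trace) ∧
      ℰ (V * ρ * Vᴴ) = V * σ * Vᴴ ∧ ℰ (V * γ * Vᴴ) = V * γ * Vᴴ := by
  have hQG := trace_compl_map_dilate_compress_eq_zero hV hγ hρ hρV hσ hΦ hΦρ
  have hVGV := compress_map_dilate_compress_eq hV hγ hγV hΦ hΦtr hΦγ hQG
  have hQσ := compress_compl_eq_zero hV hσ
  have hQH := (isHermitian_one_sub_conjTranspose_mul_self (V := V)).eq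
  set Q := 1 - Vᴴ * V
  set Ψ := conjMap V + traceSmul τ ∘ₗ conjMap Q with hΨ
  have hΨ_apply : ∀ B, Ψ B = V * B * Vᴴ + (Q * B * Q).trace • τ := by simp [hΨ, hQH]
  refine ⟨Ψ ∘ₗ Φ ∘ₗ conjMap Vᴴ, ?_, fun A => ?_, ?_, ?_⟩
  · exact ((isCompletelyPositive_conjMap V).add ((isCompletelyPositive_traceSmul hτ).comp
      (isCompletelyPositive_conjMap Q))).comp (hΦ.comp (isCompletelyPositive_conjMap Vᴴ))
  all_goals simp only [LinearMap.comp_apply, conjMap_apply, conjTranspose_conjTranspose, hΨ_apply]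
  · rw [trace_add, trace_smul, hτtr, smul_eq_mul, mul_one,
      trace_compress_add_trace_compress_compl hV, hΦtr, trace_conjTranspose_mul_mul hV]
  · rw [hρ, hΦρ, hQσ, trace_zero, zero_smul, add_zero]
  · rw [hQG, zero_smul, add_zero, hVGV]

theorem exists_dilated_channel (hV : V * Vᴴ = 1) {γ ρ σ : Matrix (Fin d) (Fin d) ℂ}
    (hγV : Commute (Vᴴ * V) γ) (hρ : Vᴴ * (V * ρ * Vᴴ) * V = ρ)
    (hσ : Vᴴ * (V * σ * Vᴴ) * V = σ)
    {ℰ : Matrix (Fin n) (Fin n) ℂ →ₗ[ℂ] Matrix (Fin n) (Fin n) ℂ}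
    (hℰ : IsCompletelyPositive ℰ)
    (hℰtr : ∀ A, (ℰ A).trace = A.trace) (hℰρ : ℰ (V * ρ * Vᴴ) = V * σ * Vᴴ)
    (hℰγ : ℰ (V * γ * Vᴴ) = V * γ * Vᴴ) :
    ∃ Φ : Matrix (Fin d) (Fin d) ℂ →ₗ[ℂ] Matrix (Fin d) (Fin d) ℂ,
      IsCompletelyPositive Φ ∧ (∀ A, (Φ A).trace = A.trace) ∧
      Φ ρ = σ ∧ Φ γ = γ := by
  have hQH : (1 - Vᴴ * V)ᴴ = 1 - Vᴴ * V := isHermitian_one_sub_conjTranspose_mul_self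
  refine ⟨conjMap Vᴴ ∘ₗ ℰ ∘ₗ conjMap V + conjMap (1 - Vᴴ * V), ?_, fun A => ?_, ?_,
    ?_⟩
  · exact ((isCompletelyPositive_conjMap Vᴴ).comp
      (hℰ.comp (isCompletelyPositive_conjMap V))).add (isCompletelyPositive_conjMap _)
  all_goals simp only [LinearMap.add_apply, LinearMap.comp_apply, conjMap_apply,
    conjTranspose_conjTranspose, hQH]
  · rw [trace_add, trace_conjTranspose_mul_mul hV, hℰtr,
      trace_compress_add_trace_compress_compl hV]
  · rw [hℰρ, hσ, compress_compl_eq_zero hV hρ, add_zero]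
  · rw [hℰγ, compress_add_compress_compl hV hγV]

theorem exists_channel_iff_exists_compressed_channel [NeZero n] (hV : V * Vᴴ = 1)
    {γ ρ σ : Matrix (Fin d) (Fin d) ℂ} (hγ : γ.PosSemidef) (hγV : Commute (Vᴴ * V) γ)
    (hρ : Vᴴ * (V * ρ * Vᴴ) * V = ρ) (hρV : (V * ρ * Vᴴ).PosDef)
    (hσ : Vᴴ * (V * σ * Vᴴ) * V = σ) :
    (∃ Φ : Matrix (Fin d) (Fin d) ℂ →ₗ[ℂ] Matrix (Fin d) (Fin d) ℂ,
      IsCompletelyPositive Φ ∧ (∀ A, (Φ A).trace = A.trace) ∧ Φ ρ = σ ∧ Φ γ = γ) ↔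
    ∃ ℰ : Matrix (Fin n) (Fin n) ℂ →ₗ[ℂ] Matrix (Fin n) (Fin n) ℂ,
      IsCompletelyPositive ℰ ∧ (∀ A, (ℰ A).trace = A.trace) ∧
      ℰ (V * ρ * Vᴴ) = V * σ * Vᴴ ∧ ℰ (V * γ * Vᴴ) = V * γ * Vᴴ := by
  have hτ : ((n : ℝ)⁻¹ • (1 : Matrix (Fin n) (Fin n) ℂ)).PosSemidef :=
    PosSemidef.one.smul (by positivity)
  have hτtr : ((n : ℝ)⁻¹ • (1 : Matrix (Fin n) (Fin n) ℂ)).trace = 1 := by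
    simp [trace_smul, NeZero.ne]
  constructor
  · rintro ⟨Φ, hΦ, hΦtr, hΦρ, hΦγ⟩
    exact exists_compressed_channel hV hγ hγV hρ hρV hσ hτ hτtr hΦ hΦtr hΦρ hΦγ
  · rintro ⟨ℰ, hℰ, hℰtr, hℰρ, hℰγ⟩
    exact exists_dilated_channel hV hγV hρ hσ hℰ hℰtr hℰρ hℰγ

end Coisometry

lemma submatrix_one_mul_mul_conjTranspose (e : Fin n → Fin d) (A : Matrix (Fin d) (Fin d) ℂ) :
    (1 : Matrix (Fin d) (Fin d) ℂ).submatrix e id * A *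
      ((1 : Matrix (Fin d) (Fin d) ℂ).submatrix e id)ᴴ = A.submatrix e e := by
  ext a b
  simp [mul_apply, one_apply]

lemma conjTranspose_submatrix_one_mul_self {e : Fin n → Fin d} (he : Function.Injective e) :
    ((1 : Matrix (Fin d) (Fin d) ℂ).submatrix e id)ᴴ *
      (1 : Matrix (Fin d) (Fin d) ℂ).submatrix e id =
      diagonal fun i => if i ∈ Set.range e then 1 else 0 := by
  ext i j
  simp only [mul_apply, conjTranspose_apply, submatrix_apply, id, one_apply, apply_ite star,
    star_one, star_zero, ite_mul, one_mul, zero_mul, diagonal_apply]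
  by_cases hi : i ∈ Set.range e
  · obtain ⟨a, rfl⟩ := hi
    simp only [he.eq_iff, Finset.sum_ite_eq', Finset.mem_univ, if_true, Set.mem_range_self]
  · have hi' : ∀ a, e a ≠ i := fun a ha => hi ⟨a, ha⟩
    simp only [hi', hi, if_false, ite_self, Finset.sum_const_zero]

lemma range_toLin'_conjTranspose_submatrix_one (e : Fin n → Fin d) :
    LinearMap.range (toLin' ((1 : Matrix (Fin d) (Fin d) ℂ).submatrix e id)ᴴ) =
      Submodule.span ℂ (Set.range fun a => Pi.single (e a) 1) := by
  rw [range_toLin']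
  congr 2
  ext a i
  simp [one_apply, Pi.single_apply]

lemma range_toLin'_conjTranspose_submatrix_one_castLE (hd : 2 ≤ d) :
    LinearMap.range (toLin' ((1 : Matrix (Fin d) (Fin d) ℂ).submatrix (Fin.castLE hd) id)ᴴ) =
      Submodule.span ℂ {Pi.single (Fin.castLE hd 0) 1, Pi.single (Fin.castLE hd 1) 1} := by
  rw [range_toLin'_conjTranspose_submatrix_one]
  congr 1
  ext v
  simp only [Set.mem_range, eq_comm, Fin.exists_fin_two, Set.mem_insert_iff,
    Set.mem_singleton_iff]

lemma exists_restrict2_diagonal_div_sum_eq_smul (hd : 2 ≤ d) {w : Fin d → ℝ} (hw : ∀ x, 0 < w x)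
    {p : ℝ} (hp : p = w (Fin.castLE hd 0) / (w (Fin.castLE hd 0) + w (Fin.castLE hd 1))) :
    ∃ c : ℂ, c ≠ 0 ∧ restrict2 hd (diagonal fun x => ((w x / ∑ y, w y : ℝ) : ℂ)) =
      c • diagonal ![(p : ℂ), ((1 - p : ℝ) : ℂ)] := by
  set s := w (Fin.castLE hd 0) + w (Fin.castLE hd 1)
  have hs : 0 < s := add_pos (hw _) (hw _)
  have hZ : 0 < ∑ y, w y := Finset.sum_pos (fun x _ => hw x) ⟨_, Finset.mem_univ (Fin.castLE hd 0)⟩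
  have h1p : 1 - p = w (Fin.castLE hd 1) / s := by
    rw [hp, one_sub_div hs.ne', add_sub_cancel_left]
  have key : ∀ x, w x / ∑ y, w y = s / (∑ y, w y) * (w x / s) := fun x => by
    rw [div_mul_div_comm, mul_comm (∑ y, w y), mul_div_mul_left _ _ hs.ne']
  refine ⟨((s / ∑ y, w y : ℝ) : ℂ), Complex.ofReal_ne_zero.2 (div_pos hs hZ).ne', ?_⟩
  rw [h1p, hp]
  ext a b
  fin_cases a <;> fin_cases b <;> simp [restrict2, diagonal_apply]
  · exact_mod_cast key _
  · exact_mod_cast key _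

end

/-- Lemma 6 of the paper: with `γ` the Gibbs state on `ℂ^d`, `ρ, σ` density matrices
supported exactly on `span{|1⟩,|2⟩}`, and `γ⁽²⁾ = p|1⟩⟨1| + (1-p)|2⟩⟨2|` the
renormalized restriction of `γ` to that subspace, there exists a CPTP map `Φ` on
`d×d` matrices with `Φ(ρ) = σ` and `Φ(γ) = γ` if and only if there exists a CPTP map
`ℰ` on `2×2` matrices with `ℰ(ρ) = σ` and `ℰ(γ⁽²⁾) = γ⁽²⁾` (where `ρ, σ` are
identified with their `2×2` restrictions). -/
theorem gibbs_preserving_reduction_to_qubit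
    {d : ℕ} (hd : 2 ≤ d) (β : ℝ) (En : Fin d → ℝ)
    (γ ρ σ : Matrix (Fin d) (Fin d) ℂ)
    (hγ : γ = Matrix.diagonal fun x =>
      ((Real.exp (-β * En x) / ∑ y, Real.exp (-β * En y) : ℝ) : ℂ))
    (hρ : ρ.PosSemidef)
    (hσ : σ.PosSemidef)
    (hsuppρ : LinearMap.range (Matrix.toLin' ρ) =
      Submodule.span ℂ {Pi.single (⟨0, by omega⟩ : Fin d) (1 : ℂ),
        Pi.single (⟨1, by omega⟩ : Fin d) (1 : ℂ)})
    (hsuppσ : LinearMap.range (Matrix.toLin' σ) =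
      Submodule.span ℂ {Pi.single (⟨0, by omega⟩ : Fin d) (1 : ℂ),
        Pi.single (⟨1, by omega⟩ : Fin d) (1 : ℂ)})
    (p : ℝ)
    (hp : p = Real.exp (-β * En ⟨0, by omega⟩) /
      (Real.exp (-β * En ⟨0, by omega⟩) + Real.exp (-β * En ⟨1, by omega⟩)))
    (γ2 : Matrix (Fin 2) (Fin 2) ℂ)
    (hγ2 : γ2 = Matrix.diagonal ![(p : ℂ), ((1 - p : ℝ) : ℂ)]) :
    (∃ Φ : Matrix (Fin d) (Fin d) ℂ →ₗ[ℂ] Matrix (Fin d) (Fin d) ℂ,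
        IsCompletelyPositive Φ ∧ (∀ A, (Φ A).trace = A.trace) ∧
        Φ ρ = σ ∧ Φ γ = γ) ↔
      (∃ ℰ : Matrix (Fin 2) (Fin 2) ℂ →ₗ[ℂ] Matrix (Fin 2) (Fin 2) ℂ,
        IsCompletelyPositive ℰ ∧ (∀ A, (ℰ A).trace = A.trace) ∧
        ℰ (restrict2 hd ρ) = restrict2 hd σ ∧ ℰ γ2 = γ2) := by
  set V := (1 : Matrix (Fin d) (Fin d) ℂ).submatrix (Fin.castLE hd) id
  have hrestrict : ∀ A, restrict2 hd A = V * A * Vᴴ :=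
    fun A => (submatrix_one_mul_mul_conjTranspose _ A).symm
  have hV : V * Vᴴ = 1 := by
    simpa using (hrestrict 1).symm.trans (submatrix_one _ (Fin.castLE_injective hd))
  have hrange := range_toLin'_conjTranspose_submatrix_one_castLE hd
  have hρV := conjTranspose_mul_compress_mul_eq_of_range_le hV hρ.isHermitian
    (hsuppρ.trans hrange.symm).le
  have hσV := conjTranspose_mul_compress_mul_eq_of_range_le hV hσ.isHermitian
    (hsuppσ.trans hrange.symm).le
  have hγV : Commute (Vᴴ * V) γ := by
    rw [conjTranspose_submatrix_one_mul_self (Fin.castLE_injective hd), hγ]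
    exact commute_diagonal _ _
  have hγpos : γ.PosSemidef :=
    hγ ▸ posSemidef_diagonal_iff.2 fun x => Complex.zero_le_real.2 (by positivity)
  obtain ⟨c, hc, hγγ2⟩ := exists_restrict2_diagonal_div_sum_eq_smul hd
    (fun x => Real.exp_pos (-β * En x)) hp
  rw [← hγ, ← hγ2] at hγγ2
  rw [exists_channel_iff_exists_compressed_channel hV hγpos hγV hρV
    (posDef_compress_of_range_le hV hρ hρV (hrange.trans hsuppρ.symm).le) hσV]
  simp only [← hrestrict, hγγ2, map_smul, smul_right_inj hc]
end
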